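/- The constraint-solving rewriting system terminates: there is no infinite sequence of applications of the rules (decomposition, deletion of trivial equations t = t, orientation t = X → X = t for non-variable t, and variable elimination with occurs-check) starting from any finite set of equality constraints. -/

import Mathlib

/-!
Lexicographic measure: (number of unsolved variables, total size of the terms, number of
equations with a non-variable left-hand side), where a variable is solved when its only
occurrence is as the left-hand side of an equation `x = t`. Decomposition and deletion lower the
size, orientation lowers the last component, and none of them creates unsolved variables.
Elimination of `x` solves `x`, which was unsolved because it also occurred elsewhere, and leaves
every other variable solved or not: an occurrence of `y ≠ x` after substitution comes from `t`
or from an old occurrence, and a solved `y` does not occur in `t`.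
-/

inductive Tm (F V : Type) : Type
  | var : V → Tm F V
  | app : F → List (Tm F V) → Tm F V

namespace Tm
variable {F V : Type}

def subst (θ : V → Tm F V) : Tm F V → Tm F V
  | var x => θ x
  | app f ts => app f (ts.attach.map (fun t => subst θ t.1))
decreasing_by simp_wf; have := List.sizeOf_lt_of_mem t.2; omega

inductive Occurs (x : V) : Tm F V → Prop
  | var : Occurs x (var x)
  | app {f : F} {ts : List (Tm F V)} {t : Tm F V} : t ∈ ts → Occurs x t → Occurs x (app f ts)

end Tm

def single {F V : Type} [DecidableEq V] (x : V) (t : Tm F V) : V → Tm F V :=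
  fun y => if y = x then t else Tm.var y

def applyEq {F V : Type} (σ : V → Tm F V) (p : Tm F V × Tm F V) : Tm F V × Tm F V :=
  (Tm.subst σ p.1, Tm.subst σ p.2)

inductive Step {F V : Type} [DecidableEq V] :
    Multiset (Tm F V × Tm F V) → Multiset (Tm F V × Tm F V) → Prop
  | decompose (f : F) (ts ss : List (Tm F V)) (R : Multiset (Tm F V × Tm F V))
      (hlen : ts.length = ss.length) :
      Step ((Tm.app f ts, Tm.app f ss) ::ₘ R) (↑(ts.zip ss) + R)
  | delete (t : Tm F V) (R : Multiset (Tm F V × Tm F V)) :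
      Step ((t, t) ::ₘ R) R
  | orient (t : Tm F V) (x : V) (R : Multiset (Tm F V × Tm F V))
      (h : ∀ y : V, t ≠ Tm.var y) :
      Step ((t, Tm.var x) ::ₘ R) ((Tm.var x, t) ::ₘ R)
  | elim (x : V) (t : Tm F V) (R : Multiset (Tm F V × Tm F V))
      (h1 : ¬ Tm.Occurs x t)
      (h2 : ∃ p ∈ R, Tm.Occurs x p.1 ∨ Tm.Occurs x p.2) :
      Step ((Tm.var x, t) ::ₘ R) ((Tm.var x, t) ::ₘ R.map (applyEq (single x t)))

namespace Tm
variable {F V : Type}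

@[induction_eliminator]
theorem induction_mem {P : Tm F V → Prop} (var : ∀ x, P (var x))
    (app : ∀ f ts, (∀ t ∈ ts, P t) → P (app f ts)) : ∀ t, P t
  | .var x => var x
  | .app f ts => app f ts fun s _ => induction_mem var app s

def vars : Tm F V → Multiset V
  | var x => {x}
  | app _ ts => (ts.map vars).sum

def size : Tm F V → ℕ
  | var _ => 1
  | app _ ts => (ts.map size).sum + 1

theorem size_pos (t : Tm F V) : 0 < t.size := by
  cases t <;> simp [size]

@[simp] theorem subst_var (θ : V → Tm F V) (x : V) : subst θ (var x) = θ x := by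
  rw [subst]

@[simp] theorem subst_app (θ : V → Tm F V) (f : F) (ts : List (Tm F V)) :
    subst θ (app f ts) = app f (ts.map (subst θ)) := by
  rw [subst, List.attach_map_val]

theorem vars_subst (θ : V → Tm F V) (s : Tm F V) :
    (subst θ s).vars = s.vars.bind fun z => (θ z).vars := by
  induction s with
  | var x => simp [vars]
  | app f ts ih =>
    simp only [subst_app, vars, List.map_map]
    induction ts with
    | nil => simp
    | cons t ts ih' =>
      simp only [List.map_cons, List.sum_cons, Multiset.add_bind, Function.comp_apply]
      rw [ih t List.mem_cons_self, ih' fun s hs => ih s (List.mem_cons_of_mem t hs)]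

theorem mem_vars_app {x : V} {f : F} {ts : List (Tm F V)} :
    x ∈ (app f ts).vars ↔ ∃ t ∈ ts, x ∈ t.vars := by
  rw [vars, ← Multiset.sum_coe]
  exact Multiset.mem_join.trans (by simp)

theorem mem_vars_iff_occurs {x : V} {t : Tm F V} : x ∈ t.vars ↔ Occurs x t := by
  induction t with
  | var y =>
    simp only [vars, Multiset.mem_singleton]
    constructor
    · rintro rfl; exact .var
    · rintro ⟨⟩; rfl
  | app f ts ih =>
    rw [mem_vars_app]
    constructor
    · rintro ⟨s, hs, hx⟩
      exact .app hs ((ih s hs).mp hx)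
    · rintro (_ | ⟨hs, hx⟩)
      exact ⟨_, hs, (ih _ hs).mpr hx⟩

end Tm

section Problems
variable {F V : Type}
open Tm

abbrev Eqns (F V : Type) : Type := Multiset (Tm F V × Tm F V)

def sumSides {M : Type*} [AddCommMonoid M] (g : Tm F V → M) (S : Eqns F V) : M :=
  (S.map fun p => g p.1 + g p.2).sum

section sumSides
variable {M : Type*} [AddCommMonoid M] (g : Tm F V → M)

@[simp] theorem sumSides_cons (a b : Tm F V) (S : Eqns F V) :
    sumSides g ((a, b) ::ₘ S) = g a + g b + sumSides g S := by
  simp [sumSides]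

@[simp] theorem sumSides_add (S S' : Eqns F V) :
    sumSides g (S + S') = sumSides g S + sumSides g S' := by
  simp [sumSides]

theorem sumSides_zip {ts ss : List (Tm F V)} (hlen : ts.length = ss.length) :
    sumSides g ↑(ts.zip ss) = (ts.map g).sum + (ss.map g).sum := by
  simp only [sumSides, Multiset.map_coe, Multiset.sum_coe, List.sum_map_add]
  congr 1
  · simpa [Function.comp_def] using congrArg (fun l => (l.map g).sum) (List.map_fst_zip hlen.le)
  · simpa [Function.comp_def] using congrArg (fun l => (l.map g).sum) (List.map_snd_zip hlen.ge)

end sumSides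

def eqnVars (S : Eqns F V) : Multiset V :=
  sumSides vars S

@[simp] theorem eqnVars_cons (a b : Tm F V) (S : Eqns F V) :
    eqnVars ((a, b) ::ₘ S) = a.vars + b.vars + eqnVars S :=
  sumSides_cons _ a b S

theorem vars_add_vars_le_eqnVars {S : Eqns F V} {p : Tm F V × Tm F V}
    (hp : p ∈ S) : p.1.vars + p.2.vars ≤ eqnVars S :=
  Multiset.le_sum_of_mem (Multiset.mem_map_of_mem (fun p => p.1.vars + p.2.vars) hp)

theorem eqnVars_map_applyEq (θ : V → Tm F V) (R : Eqns F V) :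
    eqnVars (R.map (applyEq θ)) = (eqnVars R).bind fun z => (θ z).vars := by
  induction R using Multiset.induction_on with
  | empty => simp [eqnVars, sumSides]
  | cons p R ih =>
    rw [Multiset.map_cons, applyEq, eqnVars_cons, ih, ← Prod.mk.eta (p := p), eqnVars_cons]
    simp [vars_subst, Multiset.add_bind]

variable [DecidableEq V]

section single
variable {x : V} {t : Tm F V} (m : Multiset V)

theorem not_mem_bind_single (hx : x ∉ t.vars) : x ∉ m.bind fun z => (single x t z).vars := by
  simp only [Multiset.mem_bind, single, not_exists, not_and]
  intro z _
  split_ifs with hz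
  · exact hx
  · simpa [vars] using Ne.symm hz

theorem mem_or_mem_of_mem_bind_single {y : V} (hy : y ∈ m.bind fun z => (single x t z).vars) :
    y ∈ t.vars ∨ y ∈ m := by
  obtain ⟨z, hz, hyz⟩ := Multiset.mem_bind.mp hy
  unfold single at hyz
  split_ifs at hyz
  · exact .inl hyz
  · simp only [vars, Multiset.mem_singleton] at hyz
    exact .inr (hyz ▸ hz)

theorem count_bind_single_of_ne {y : V} (hyx : y ≠ x) (hy : y ∉ t.vars) :
    (m.bind fun z => (single x t z).vars).count y = m.count y := by
  have hpoint : ∀ z, (single x t z).vars.count y = ({z} : Multiset V).count y := by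
    intro z
    unfold single
    split_ifs with hz
    · simp [Multiset.count_eq_zero_of_notMem hy, hz, hyx]
    · rw [vars]
  rw [Multiset.count_bind, funext hpoint, ← Multiset.count_bind, Multiset.bind_singleton,
    Multiset.map_id']

end single

def IsSolved (x : V) (S : Eqns F V) : Prop :=
  (eqnVars S).count x = 1 ∧ ∃ t, (var x, t) ∈ S

open Classical in
noncomputable def unsolved (S : Eqns F V) : Finset V :=
  (eqnVars S).toFinset.filter fun x => ¬ IsSolved x S

open Classical in
noncomputable def nonVarLhsCount (S : Eqns F V) : ℕ :=
  S.countP fun p => ∀ y, p.1 ≠ var y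

noncomputable def terminationMeasure (S : Eqns F V) : ℕ ×ₗ ℕ ×ₗ ℕ :=
  toLex ((unsolved S).card, toLex (sumSides size S, nonVarLhsCount S))

variable {S S' : Eqns F V}

theorem mem_unsolved {x : V} : x ∈ unsolved S ↔ x ∈ eqnVars S ∧ ¬ IsSolved x S := by
  simp [unsolved]

theorem unsolved_subset (hv : ∀ y ∈ eqnVars S', y ∈ eqnVars S)
    (hs : ∀ y, IsSolved y S → IsSolved y S') : unsolved S' ⊆ unsolved S := by
  intro y hy
  rw [mem_unsolved] at hy ⊢
  exact ⟨hv y hy.1, fun h => hy.2 (hs y h)⟩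

theorem unsolved_subset_of_eqnVars_eq (hv : eqnVars S' = eqnVars S)
    (hmem : ∀ x t, (var x, t) ∈ S → (var x, t) ∈ S') : unsolved S' ⊆ unsolved S :=
  unsolved_subset (fun _ => hv ▸ id) fun _ ⟨hcount, t, ht⟩ =>
    ⟨hv ▸ hcount, t, hmem _ _ ht⟩

theorem terminationMeasure_lt_of_ssubset (h : unsolved S' ⊂ unsolved S) :
    terminationMeasure S' < terminationMeasure S :=
  Prod.Lex.lt_iff.mpr (.inl (Finset.card_lt_card h))

theorem terminationMeasure_lt_of_subset (h : unsolved S' ⊆ unsolved S)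
    (hrest : toLex (sumSides size S', nonVarLhsCount S') <
      toLex (sumSides size S, nonVarLhsCount S)) :
    terminationMeasure S' < terminationMeasure S := by
  rcases (Finset.card_le_card h).lt_or_eq with hlt | heq
  · exact Prod.Lex.lt_iff.mpr (.inl hlt)
  · exact Prod.Lex.lt_iff.mpr (.inr ⟨heq, hrest⟩)

theorem terminationMeasure_lt_decompose (f : F) {ts ss : List (Tm F V)} (R : Eqns F V)
    (hlen : ts.length = ss.length) :
    terminationMeasure ((ts.zip ss : Eqns F V) + R) <
      terminationMeasure ((app f ts, app f ss) ::ₘ R) := by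
  have hvars : eqnVars ((ts.zip ss : Eqns F V) + R) = eqnVars ((app f ts, app f ss) ::ₘ R) := by
    simp only [eqnVars, sumSides_add, sumSides_cons, sumSides_zip _ hlen, vars]
  have hsize : sumSides size ((ts.zip ss : Eqns F V) + R) <
      sumSides size ((app f ts, app f ss) ::ₘ R) := by
    simp only [sumSides_add, sumSides_cons, sumSides_zip _ hlen, size]
    omega
  refine terminationMeasure_lt_of_subset (unsolved_subset_of_eqnVars_eq hvars ?_)
    (Prod.Lex.lt_iff.mpr (.inl hsize))
  intro x t hx
  rcases Multiset.mem_cons.mp hx with h | h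
  · simp at h
  · exact Multiset.mem_add.mpr (.inr h)

theorem terminationMeasure_lt_delete (t : Tm F V) (R : Eqns F V) :
    terminationMeasure R < terminationMeasure ((t, t) ::ₘ R) := by
  have hsize : sumSides size R < sumSides size ((t, t) ::ₘ R) := by
    simp only [sumSides_cons]
    have := t.size_pos
    omega
  refine terminationMeasure_lt_of_subset (unsolved_subset ?_ ?_) (Prod.Lex.lt_iff.mpr (.inl hsize))
  · intro y hy
    simp [hy]
  · rintro y ⟨hcount, s, hs⟩
    simp only [eqnVars_cons, Multiset.count_add] at hcount
    refine ⟨by omega, s, ?_⟩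
    rcases Multiset.mem_cons.mp hs with h | h
    · obtain ⟨rfl, -⟩ := Prod.mk.inj h
      simp [vars] at hcount
      omega
    · exact h

theorem terminationMeasure_lt_orient {t : Tm F V} (x : V) (R : Eqns F V)
    (ht : ∀ y, t ≠ var y) :
    terminationMeasure ((var x, t) ::ₘ R) < terminationMeasure ((t, var x) ::ₘ R) := by
  have hvars : eqnVars ((var x, t) ::ₘ R) = eqnVars ((t, var x) ::ₘ R) := by
    simp only [eqnVars_cons, add_comm (var x).vars]
  have hsize : sumSides size ((var x, t) ::ₘ R) = sumSides size ((t, var x) ::ₘ R) := by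
    simp only [sumSides_cons, add_comm (var x).size]
  have hcount : nonVarLhsCount ((var x, t) ::ₘ R) < nonVarLhsCount ((t, var x) ::ₘ R) := by
    simp [nonVarLhsCount, ht]
  refine terminationMeasure_lt_of_subset (unsolved_subset_of_eqnVars_eq hvars ?_)
    (Prod.Lex.lt_iff.mpr (.inr ⟨hsize, hcount⟩))
  intro y s hs
  rcases Multiset.mem_cons.mp hs with h | h
  · exact absurd (Prod.mk.inj h).1.symm (ht y)
  · exact Multiset.mem_cons_of_mem h

theorem IsSolved.map_applyEq_single {x y : V} {t : Tm F V} {R : Eqns F V}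
    (hyx : y ≠ x) (h : IsSolved y ((var x, t) ::ₘ R)) :
    IsSolved y ((var x, t) ::ₘ R.map (applyEq (single x t))) := by
  obtain ⟨hcount, s, hs⟩ := h
  have hsR : (var y, s) ∈ R := by
    rcases Multiset.mem_cons.mp hs with h | h
    · simp [hyx] at h
    · exact h
  have hyR : 0 < (eqnVars R).count y :=
    Multiset.count_pos.mpr (Multiset.mem_of_le (vars_add_vars_le_eqnVars hsR) (by simp [vars]))
  simp only [eqnVars_cons, Multiset.count_add, vars, Multiset.count_singleton, hyx,
    if_false] at hcount
  have hyt : y ∉ t.vars := Multiset.count_eq_zero.mp (by omega)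
  refine ⟨?_, subst (single x t) s,
    Multiset.mem_cons_of_mem (Multiset.mem_map.mpr ⟨_, hsR, ?_⟩)⟩
  · rw [eqnVars_cons, eqnVars_map_applyEq, Multiset.count_add, Multiset.count_add,
      count_bind_single_of_ne _ hyx hyt]
    simpa [vars, hyx] using hcount
  · simp [applyEq, single, hyx]

theorem terminationMeasure_lt_elim {x : V} {t : Tm F V} {R : Eqns F V}
    (hx : x ∉ t.vars) (hxR : x ∈ eqnVars R) :
    terminationMeasure ((var x, t) ::ₘ R.map (applyEq (single x t))) <
      terminationMeasure ((var x, t) ::ₘ R) := by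
  have hcountR := Multiset.count_pos.mpr hxR
  apply terminationMeasure_lt_of_ssubset
  refine (Finset.ssubset_iff_of_subset (unsolved_subset ?_ ?_)).mpr ⟨x, ?_, ?_⟩
  · intro y hy
    simp only [eqnVars_cons, eqnVars_map_applyEq, Multiset.mem_add] at hy ⊢
    rcases hy with hy | hy
    · exact .inl hy
    · exact (mem_or_mem_of_mem_bind_single _ hy).imp_left .inr
  · intro y hy
    by_cases hyx : y = x
    · subst hyx
      have := hy.1
      simp only [eqnVars_cons, Multiset.count_add, vars, Multiset.count_singleton_self] at this
      omega
    · exact hy.map_applyEq_single hyx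
  · rw [mem_unsolved]
    refine ⟨by simp [hxR], fun hsolved => ?_⟩
    have := hsolved.1
    simp only [eqnVars_cons, Multiset.count_add, vars, Multiset.count_singleton_self] at this
    omega
  · rw [mem_unsolved, not_and, not_not]
    refine fun _ => ⟨?_, t, Multiset.mem_cons_self _ _⟩
    rw [eqnVars_cons, eqnVars_map_applyEq, Multiset.count_add, Multiset.count_add,
      Multiset.count_eq_zero.mpr hx, Multiset.count_eq_zero.mpr (not_mem_bind_single _ hx)]
    simp [vars]

theorem Step.terminationMeasure_lt {S S' : Eqns F V} (h : Step S S') :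
    terminationMeasure S' < terminationMeasure S := by
  cases h with
  | decompose f ts ss R hlen => exact terminationMeasure_lt_decompose f R hlen
  | delete t _ => exact terminationMeasure_lt_delete t _
  | orient t x R ht => exact terminationMeasure_lt_orient x R ht
  | elim x t R hocc hoccR =>
    obtain ⟨p, hp, hxp⟩ := hoccR
    refine terminationMeasure_lt_elim (mt mem_vars_iff_occurs.mp hocc)
      (Multiset.mem_of_le (vars_add_vars_le_eqnVars hp) ?_)
    simpa only [Multiset.mem_add, mem_vars_iff_occurs] using hxp

end Problems

/-- The constraint-solving rewriting system terminates: there is no infinite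
sequence of rule applications starting from any finite set of equality constraints. -/
theorem unification_rules_terminate {F V : Type} [DecidableEq V]
    (f : ℕ → Multiset (Tm F V × Tm F V)) :
    ¬ (∀ n : ℕ, Step (f n) (f (n + 1))) := by
  intro hstep
  obtain ⟨n, hn⟩ :=
    WellFounded.not_rel_apply_succ (r := (· < ·)) fun n => terminationMeasure (f n)
  exact hn (hstep n).terminationMeasure_lt
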